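/- arXiv:2009.11176 — 4 statements merged into one kernel-verified Lean document; each statement's English description precedes it below -/
import Mathlib

section
/- (Tail sum estimate with exponent 2/3, two singularities.) There exists a constant C > 0 such that for all integers K ≥ 1 and all integers a, b with 1 ≤ a ≤ b ≤ K, one has Σ_{l = K+1}^{∞} l^{2/3}/((l − a)(l − b)²) ≤ C K^{2/3}/((K − a + 1)(K − b + 1)). -/
open Real

set_option maxHeartbeats 1600000 in
/-- Tail sum estimate with exponent 2/3 and two singularities. -/

theorem tail_sum_two_thirds_two_singularities :
    ∃ C : ℝ, 0 < C ∧
      ∀ K : ℕ, 1 ≤ K → ∀ a b : ℕ, 1 ≤ a → a ≤ b → b ≤ K →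
        (∑' l : ℕ, if K + 1 ≤ l then
            (l : ℝ) ^ ((2 : ℝ) / 3) / (((l : ℝ) - (a : ℝ)) * ((l : ℝ) - (b : ℝ)) ^ 2)
          else 0) ≤
          C * (K : ℝ) ^ ((2 : ℝ) / 3) /
            (((K : ℝ) - (a : ℝ) + 1) * ((K : ℝ) - (b : ℝ) + 1)) := by
  refine ⟨8, by norm_num, ?_⟩
  intro K hK a b ha hab hbK
  have haK : a ≤ K := hab.trans hbK
  have hK1 : (1:ℝ) ≤ (K:ℝ) := by exact_mod_cast hK
  have hKpos : (0:ℝ) < (K:ℝ) := by linarith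
  have haR : (1:ℝ) ≤ (a:ℝ) := by exact_mod_cast ha
  have habR : (a:ℝ) ≤ (b:ℝ) := by exact_mod_cast hab
  have hbKR : (b:ℝ) ≤ (K:ℝ) := by exact_mod_cast hbK
  set A : ℝ := (K:ℝ) - (a:ℝ) + 1 with hAdef
  set B : ℝ := (K:ℝ) - (b:ℝ) + 1 with hBdef
  have hA1 : 1 ≤ A := by rw [hAdef]; linarith
  have hB1 : 1 ≤ B := by rw [hBdef]; linarith
  have hAK : A ≤ (K:ℝ) := by rw [hAdef]; linarith
  have hBK : B ≤ (K:ℝ) := by rw [hBdef]; linarith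
  have hK23 : (0:ℝ) < (K:ℝ) ^ ((2:ℝ)/3) := rpow_pos_of_pos hKpos _
  have hK13 : (0:ℝ) < (K:ℝ) ^ ((1:ℝ)/3) := rpow_pos_of_pos hKpos _
  set h1 : ℕ → ℝ := fun l => 4 * (K:ℝ) ^ ((2:ℝ)/3) / (A * (((max l (K+1) : ℕ) : ℝ) - (b:ℝ))) with hh1
  set h2 : ℕ → ℝ := fun l => 8 / ((K:ℝ) ^ ((1:ℝ)/3) * ((max l (2*K) : ℕ) : ℝ)) with hh2
  have hden1 : ∀ l : ℕ, B ≤ ((max l (K+1) : ℕ) : ℝ) - (b:ℝ) := by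
    intro l
    have h0 : (K+1 : ℕ) ≤ max l (K+1) := le_max_right _ _
    have h' : ((K:ℝ)+1) ≤ ((max l (K+1) : ℕ) : ℝ) := by exact_mod_cast h0
    rw [hBdef]; linarith
  have hden1' : ∀ l : ℕ, (0:ℝ) < ((max l (K+1) : ℕ) : ℝ) - (b:ℝ) := fun l =>
    lt_of_lt_of_le (by linarith [hB1]) (hden1 l)
  have hden2 : ∀ l : ℕ, (0:ℝ) < ((max l (2*K) : ℕ) : ℝ) := by
    intro l
    have h0 : (2*K : ℕ) ≤ max l (2*K) := le_max_right _ _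
    have h' : (2*(K:ℝ)) ≤ ((max l (2*K) : ℕ) : ℝ) := by exact_mod_cast h0
    linarith
  have hA0 : (0:ℝ) < A := by linarith
  have hB0 : (0:ℝ) < B := by linarith
  clear_value A B
  have hdivmono : ∀ (c x y : ℝ), 0 ≤ c → 0 < x → x ≤ y → c / y ≤ c / x := by
    intro c x y hc hx hxy
    gcongr
  have hmono1 : ∀ l : ℕ, h1 (l+1) ≤ h1 l := by
    intro l
    have hmx : max l (K+1) ≤ max (l+1) (K+1) := max_le_max (Nat.le_succ l) le_rfl
    have hmx' : ((max l (K+1) : ℕ) : ℝ) ≤ ((max (l+1) (K+1) : ℕ) : ℝ) := by exact_mod_cast hmx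
    simp only [hh1]
    exact hdivmono _ _ _ (by positivity) (mul_pos hA0 (hden1' l)) (by nlinarith [hden1' l])
  have hmono2 : ∀ l : ℕ, h2 (l+1) ≤ h2 l := by
    intro l
    have hmx : max l (2*K) ≤ max (l+1) (2*K) := max_le_max (Nat.le_succ l) le_rfl
    have hmx' : ((max l (2*K) : ℕ) : ℝ) ≤ ((max (l+1) (2*K) : ℕ) : ℝ) := by exact_mod_cast hmx
    simp only [hh2]
    exact hdivmono _ _ _ (by norm_num) (mul_pos hK13 (hden2 l)) (by nlinarith [hden2 l])
  have h1nn : ∀ l : ℕ, 0 ≤ h1 l := by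
    intro l
    simp only [hh1]
    exact div_nonneg (by positivity) (mul_pos hA0 (hden1' l)).le
  have h2nn : ∀ l : ℕ, 0 ≤ h2 l := by
    intro l
    simp only [hh2]
    exact div_nonneg (by norm_num) (mul_pos hK13 (hden2 l)).le
  -- key pointwise bound
  have key : ∀ l : ℕ, (if K + 1 ≤ l then
      (l : ℝ) ^ ((2 : ℝ) / 3) / (((l : ℝ) - (a : ℝ)) * ((l : ℝ) - (b : ℝ)) ^ 2)
      else 0) ≤ (h1 l - h1 (l+1)) + (h2 l - h2 (l+1)) := by
    intro l
    by_cases hl : K + 1 ≤ l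
    · rw [if_pos hl]
      have hl1 : K + 1 ≤ l + 1 := hl.trans (Nat.le_succ l)
      have hLr : (K:ℝ) + 1 ≤ (l:ℝ) := by exact_mod_cast hl
      have hLa : A ≤ (l:ℝ) - (a:ℝ) := by rw [hAdef]; linarith
      have hLb : B ≤ (l:ℝ) - (b:ℝ) := by rw [hBdef]; linarith
      have hLa0 : (0:ℝ) < (l:ℝ) - (a:ℝ) := by linarith
      have hLb0 : (0:ℝ) < (l:ℝ) - (b:ℝ) := by linarith
      have hLb1 : (1:ℝ) ≤ (l:ℝ) - (b:ℝ) := by linarith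
      have hLnn : (0:ℝ) ≤ (l:ℝ) := by linarith
      by_cases hl2 : l ≤ 2*K
      · -- middle range: use h1 telescoping
        have hL2r : (l:ℝ) ≤ 2*(K:ℝ) := by exact_mod_cast hl2
        have e1 : h1 l = 4 * (K:ℝ) ^ ((2:ℝ)/3) / (A * ((l:ℝ) - (b:ℝ))) := by
          simp only [hh1, max_eq_left hl]
        have e2 : h1 (l+1) = 4 * (K:ℝ) ^ ((2:ℝ)/3) / (A * ((l:ℝ) + 1 - (b:ℝ))) := by
          simp only [hh1, max_eq_left hl1]
          push_cast
          ring_nf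
        have hnum : (l:ℝ) ^ ((2:ℝ)/3) ≤ 2 * (K:ℝ) ^ ((2:ℝ)/3) := by
          have s1 : (l:ℝ) ^ ((2:ℝ)/3) ≤ (2*(K:ℝ)) ^ ((2:ℝ)/3) :=
            Real.rpow_le_rpow hLnn (by linarith) (by norm_num)
          have s2 : (2*(K:ℝ)) ^ ((2:ℝ)/3) = 2 ^ ((2:ℝ)/3) * (K:ℝ) ^ ((2:ℝ)/3) :=
            Real.mul_rpow (by norm_num) hKpos.le
          have s3 : (2:ℝ) ^ ((2:ℝ)/3) ≤ 2 := by
            calc (2:ℝ) ^ ((2:ℝ)/3) ≤ 2 ^ (1:ℝ) :=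
                  Real.rpow_le_rpow_of_exponent_le one_le_two (by norm_num)
              _ = 2 := Real.rpow_one 2
          nlinarith [hK23.le]
        have hdiff : h1 l - h1 (l+1)
            = 4 * (K:ℝ) ^ ((2:ℝ)/3) / (A * ((l:ℝ) - (b:ℝ)) * ((l:ℝ) + 1 - (b:ℝ))) := by
          have n1 : A ≠ 0 := ne_of_gt hA0
          have n2 : (l:ℝ) - (b:ℝ) ≠ 0 := ne_of_gt hLb0
          have n3 : (l:ℝ) + 1 - (b:ℝ) ≠ 0 := by intro h; rw [sub_eq_zero] at h; linarith
          rw [e1, e2]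
          field_simp
          ring
        have hmain : (l : ℝ) ^ ((2 : ℝ) / 3) / (((l : ℝ) - (a : ℝ)) * ((l : ℝ) - (b : ℝ)) ^ 2)
            ≤ 4 * (K:ℝ) ^ ((2:ℝ)/3) / (A * ((l:ℝ) - (b:ℝ)) * ((l:ℝ) + 1 - (b:ℝ))) := by
          rw [div_le_div_iff₀ (mul_pos hLa0 (pow_pos hLb0 2))
            (mul_pos (mul_pos hA0 hLb0) (show (0:ℝ) < (l:ℝ) + 1 - (b:ℝ) by linarith))]
          have t1 : A * ((l:ℝ) - (b:ℝ)) * ((l:ℝ) + 1 - (b:ℝ))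
              ≤ 2 * (((l:ℝ) - (a:ℝ)) * ((l:ℝ) - (b:ℝ)) ^ 2) := by
            nlinarith [mul_le_mul_of_nonneg_right hLa
                (mul_pos hLb0 (by linarith : (0:ℝ) < (l:ℝ) + 1 - (b:ℝ))).le,
              mul_le_mul_of_nonneg_left (by linarith : (l:ℝ) + 1 - (b:ℝ) ≤ 2*((l:ℝ) - (b:ℝ)))
                (mul_pos hLa0 hLb0).le]
          have t2 := mul_le_mul hnum t1
            (mul_pos (mul_pos hA0 hLb0) (show (0:ℝ) < (l:ℝ) + 1 - (b:ℝ) by linarith)).le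
            (by positivity)
          nlinarith [t2]
        have := hmono2 l
        linarith [hmain, hdiff]
      · -- tail range: use h2 telescoping
        push_neg at hl2
        have hl2' : 2*K + 1 ≤ l := hl2
        have hL2r : 2*(K:ℝ) + 1 ≤ (l:ℝ) := by exact_mod_cast hl2'
        have hLpos : (0:ℝ) < (l:ℝ) := by linarith
        have e1 : h2 l = 8 / ((K:ℝ) ^ ((1:ℝ)/3) * (l:ℝ)) := by
          simp only [hh2, max_eq_left (le_of_lt hl2)]
        have e2 : h2 (l+1) = 8 / ((K:ℝ) ^ ((1:ℝ)/3) * ((l:ℝ) + 1)) := by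
          simp only [hh2, max_eq_left (le_of_lt (hl2.trans (Nat.lt_succ_self l)))]
          push_cast
          ring_nf
        have hdiff : h2 l - h2 (l+1)
            = 8 / ((K:ℝ) ^ ((1:ℝ)/3) * (l:ℝ) * ((l:ℝ) + 1)) := by
          have n1 : (K:ℝ) ^ ((1:ℝ)/3) ≠ 0 := hK13.ne'
          have n2 : (l:ℝ) ≠ 0 := hLpos.ne'
          have n3 : (l:ℝ) + 1 ≠ 0 := by positivity
          rw [e1, e2]
          field_simp
          ring
        have hsub : (K:ℝ) ^ ((1:ℝ)/3) ≤ (l:ℝ) ^ ((1:ℝ)/3) :=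
          Real.rpow_le_rpow hKpos.le (by linarith) (by norm_num)
        have hLL : (l:ℝ) ^ ((2:ℝ)/3) * (l:ℝ) ^ ((1:ℝ)/3) = (l:ℝ) := by
          rw [← Real.rpow_add hLpos]
          norm_num
        have hLK : (l:ℝ) ^ ((2:ℝ)/3) * (K:ℝ) ^ ((1:ℝ)/3) ≤ (l:ℝ) := by
          calc (l:ℝ) ^ ((2:ℝ)/3) * (K:ℝ) ^ ((1:ℝ)/3)
              ≤ (l:ℝ) ^ ((2:ℝ)/3) * (l:ℝ) ^ ((1:ℝ)/3) :=
                mul_le_mul_of_nonneg_left hsub (Real.rpow_nonneg hLnn _)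
            _ = (l:ℝ) := hLL
        have hmain : (l : ℝ) ^ ((2 : ℝ) / 3) / (((l : ℝ) - (a : ℝ)) * ((l : ℝ) - (b : ℝ)) ^ 2)
            ≤ 8 / ((K:ℝ) ^ ((1:ℝ)/3) * (l:ℝ) * ((l:ℝ) + 1)) := by
          rw [div_le_div_iff₀ (mul_pos hLa0 (pow_pos hLb0 2)) (by positivity)]
          have u1 : (l:ℝ) ^ ((2:ℝ)/3) * ((K:ℝ) ^ ((1:ℝ)/3) * (l:ℝ) * ((l:ℝ) + 1))
              ≤ (l:ℝ) * ((l:ℝ) * ((l:ℝ) + 1)) := by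
            nlinarith [mul_le_mul_of_nonneg_right hLK
              (show (0:ℝ) ≤ (l:ℝ) * ((l:ℝ) + 1) by positivity)]
          have hba2 : (l:ℝ) + 1 ≤ 2*((l:ℝ) - (a:ℝ)) := by linarith
          have hbb2 : (l:ℝ) + 1 ≤ 2*((l:ℝ) - (b:ℝ)) := by linarith
          have u2 : (l:ℝ) * ((l:ℝ) * ((l:ℝ) + 1))
              ≤ 8 * (((l:ℝ) - (a:ℝ)) * ((l:ℝ) - (b:ℝ)) ^ 2) := by
            nlinarith [mul_le_mul hba2 (pow_le_pow_left₀ (by linarith : (0:ℝ) ≤ (l:ℝ)+1) hbb2 2)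
                (by positivity : (0:ℝ) ≤ ((l:ℝ)+1)^2) (by linarith : (0:ℝ) ≤ 2*((l:ℝ)-(a:ℝ))),
              sq_nonneg ((l:ℝ)+1), hLpos.le]
          linarith [u1, u2]
        have := hmono1 l
        linarith [hmain, hdiff]
    · rw [if_neg hl]
      linarith [hmono1 l, hmono2 l]
  -- finite sums are bounded by h1 0 + h2 0
  have hf0 : ∀ l : ℕ, 0 ≤ (if K + 1 ≤ l then
      (l : ℝ) ^ ((2 : ℝ) / 3) / (((l : ℝ) - (a : ℝ)) * ((l : ℝ) - (b : ℝ)) ^ 2)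
      else 0) := by
    intro l
    split
    · rename_i hl
      have hLr : (K:ℝ) + 1 ≤ (l:ℝ) := by exact_mod_cast hl
      have hLa0 : (0:ℝ) < (l:ℝ) - (a:ℝ) := by linarith
      have hLb0 : (0:ℝ) < (l:ℝ) - (b:ℝ) := by linarith
      have hLnn : (0:ℝ) ≤ (l:ℝ) := by linarith
      exact div_nonneg (Real.rpow_nonneg hLnn _) (mul_nonneg hLa0.le (sq_nonneg _))
    · exact le_refl 0
  have hbound : ∀ u : Finset ℕ, (∑ l ∈ u, if K + 1 ≤ l then
      (l : ℝ) ^ ((2 : ℝ) / 3) / (((l : ℝ) - (a : ℝ)) * ((l : ℝ) - (b : ℝ)) ^ 2)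
      else 0) ≤ h1 0 + h2 0 := by
    intro u
    obtain ⟨n, hn⟩ := u.exists_nat_subset_range
    calc (∑ l ∈ u, if K + 1 ≤ l then
          (l : ℝ) ^ ((2 : ℝ) / 3) / (((l : ℝ) - (a : ℝ)) * ((l : ℝ) - (b : ℝ)) ^ 2)
          else 0)
        ≤ (∑ l ∈ Finset.range n, if K + 1 ≤ l then
          (l : ℝ) ^ ((2 : ℝ) / 3) / (((l : ℝ) - (a : ℝ)) * ((l : ℝ) - (b : ℝ)) ^ 2)
          else 0) := Finset.sum_le_sum_of_subset_of_nonneg hn (fun i _ _ => hf0 i)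
      _ ≤ ∑ l ∈ Finset.range n, ((h1 l - h1 (l+1)) + (h2 l - h2 (l+1))) :=
          Finset.sum_le_sum (fun i _ => key i)
      _ = (h1 0 - h1 n) + (h2 0 - h2 n) := by
          rw [Finset.sum_add_distrib, Finset.sum_range_sub' h1, Finset.sum_range_sub' h2]
      _ ≤ h1 0 + h2 0 := by linarith [h1nn n, h2nn n]
  have e10 : h1 0 = 4 * (K:ℝ) ^ ((2:ℝ)/3) / (A * B) := by
    have : max 0 (K+1) = K + 1 := by simp
    simp only [hh1, this, hBdef]
    push_cast
    ring_nf
  have e20 : h2 0 = 8 / ((K:ℝ) ^ ((1:ℝ)/3) * (2*(K:ℝ))) := by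
    have : max 0 (2*K) = 2*K := by simp
    simp only [hh2, this]
    push_cast
    ring_nf
  have hfinal : h1 0 + h2 0 ≤ 8 * (K:ℝ) ^ ((2:ℝ)/3) / (A * B) := by
    rw [e10, e20]
    have hid : (K:ℝ) ^ ((2:ℝ)/3) * (K:ℝ) ^ ((1:ℝ)/3) = (K:ℝ) := by
      rw [← Real.rpow_add hKpos]
      norm_num
    have heq : 4 * (K:ℝ) ^ ((2:ℝ)/3) * ((K:ℝ) ^ ((1:ℝ)/3) * (2*(K:ℝ)))
        = 8 * ((K:ℝ) * (K:ℝ)) := by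
      rw [show 4 * (K:ℝ) ^ ((2:ℝ)/3) * ((K:ℝ) ^ ((1:ℝ)/3) * (2*(K:ℝ)))
          = 8 * ((K:ℝ) ^ ((2:ℝ)/3) * (K:ℝ) ^ ((1:ℝ)/3)) * (K:ℝ) by ring, hid]
      ring
    have hstep : 8 / ((K:ℝ) ^ ((1:ℝ)/3) * (2*(K:ℝ))) ≤ 4 * (K:ℝ) ^ ((2:ℝ)/3) / (A * B) := by
      rw [div_le_div_iff₀ (by positivity) (mul_pos hA0 hB0)]
      have hAB : A * B ≤ (K:ℝ) * (K:ℝ) :=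
        mul_le_mul hAK hBK (by linarith) hKpos.le
      calc 8 * (A * B) ≤ 8 * ((K:ℝ) * (K:ℝ)) := by linarith
        _ = 4 * (K:ℝ) ^ ((2:ℝ)/3) * ((K:ℝ) ^ ((1:ℝ)/3) * (2*(K:ℝ))) := heq.symm
    have esplit : 8 * (K:ℝ) ^ ((2:ℝ)/3) / (A * B)
        = 4 * (K:ℝ) ^ ((2:ℝ)/3) / (A * B) + 4 * (K:ℝ) ^ ((2:ℝ)/3) / (A * B) := by ring
    rw [esplit]
    linarith [hstep]
  calc (∑' l : ℕ, if K + 1 ≤ l then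
        (l : ℝ) ^ ((2 : ℝ) / 3) / (((l : ℝ) - (a : ℝ)) * ((l : ℝ) - (b : ℝ)) ^ 2)
        else 0)
      ≤ h1 0 + h2 0 := tsum_le_of_sum_le' (by linarith [h1nn 0, h2nn 0]) hbound
    _ ≤ 8 * (K:ℝ) ^ ((2:ℝ)/3) / (A * B) := hfinal
end

section
/- (Weighted double-singularity sum estimate.) There exists a constant C > 0 such that for all integers K ≥ 2 and all integers a with 1 ≤ a ≤ K, one has Σ_{j=1, j ≠ a}^{K} ((a^{1/3} + j^{1/3})/|a − j|) · K^{2/3}/((K − a + 1)(K − j + 1)) ≤ C K (log K)/(K − a + 1)². -/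
open Real Finset

lemma harm_le (K : ℕ) : ∑ d ∈ Finset.Icc 1 K, (1:ℝ)/(d:ℝ) ≤ 1 + Real.log K := by
  have h := harmonic_le_one_add_log K
  have he : ((harmonic K : ℚ) : ℝ) = ∑ d ∈ Finset.Icc 1 K, (1:ℝ)/(d:ℝ) := by
    rw [harmonic_eq_sum_Icc]; push_cast; simp [one_div]
  linarith [he ▸ h]

lemma sum_B_le (a K : ℕ) (hK : 1 ≤ K) :
    ∑ j ∈ (Finset.Icc 1 K).erase a, 1/((K:ℝ)-(j:ℝ)+1) ≤ 1 + Real.log K := by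
  have h1 : ∑ j ∈ (Finset.Icc 1 K).erase a, 1/((K:ℝ)-(j:ℝ)+1)
      ≤ ∑ j ∈ Finset.Icc 1 K, 1/((K:ℝ)-(j:ℝ)+1) := by
    apply Finset.sum_le_sum_of_subset_of_nonneg (Finset.erase_subset _ _)
    intro j hj _
    rw [Finset.mem_Icc] at hj
    have h0 : (j:ℝ) ≤ K := by exact_mod_cast hj.2
    have : (0:ℝ) < (K:ℝ)-(j:ℝ)+1 := by linarith
    positivity
  have h2 : ∑ j ∈ Finset.Icc 1 K, 1/((K:ℝ)-(j:ℝ)+1)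
      = ∑ d ∈ Finset.Icc 1 K, (1:ℝ)/(d:ℝ) := by
    apply Finset.sum_nbij' (fun j => K + 1 - j) (fun d => K + 1 - d)
    · intro j hj; rw [Finset.mem_Icc] at *; omega
    · intro d hd; rw [Finset.mem_Icc] at *; omega
    · intro j hj; rw [Finset.mem_Icc] at hj; omega
    · intro d hd; rw [Finset.mem_Icc] at hd; omega
    · intro j hj
      rw [Finset.mem_Icc] at hj
      have hle : j ≤ K + 1 := by omega
      rw [Nat.cast_sub hle]
      push_cast
      ring_nf
  calc _ ≤ _ := h1
    _ = _ := h2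
    _ ≤ 1 + Real.log K := harm_le K

lemma sum_abs_le (a K : ℕ) (ha1 : 1 ≤ a) (haK : a ≤ K) :
    ∑ j ∈ (Finset.Icc 1 K).erase a, 1/|(a:ℝ)-(j:ℝ)| ≤ 2*(1 + Real.log K) := by
  have hset : (Finset.Icc 1 K).erase a = Finset.Icc 1 (a-1) ∪ Finset.Icc (a+1) K := by
    ext x
    simp only [Finset.mem_erase, Finset.mem_Icc, Finset.mem_union]
    omega
  have hdisj : Disjoint (Finset.Icc 1 (a-1)) (Finset.Icc (a+1) K) := by
    rw [Finset.disjoint_left]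
    intro x hx hx'
    rw [Finset.mem_Icc] at *
    omega
  rw [hset, Finset.sum_union hdisj]
  have hS1 : ∑ j ∈ Finset.Icc 1 (a-1), 1/|(a:ℝ)-(j:ℝ)|
      = ∑ d ∈ Finset.Icc 1 (a-1), (1:ℝ)/(d:ℝ) := by
    apply Finset.sum_nbij' (fun j => a - j) (fun d => a - d)
    · intro j hj; rw [Finset.mem_Icc] at *; omega
    · intro d hd; rw [Finset.mem_Icc] at *; omega
    · intro j hj; rw [Finset.mem_Icc] at hj; omega
    · intro d hd; rw [Finset.mem_Icc] at hd; omega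
    · intro j hj
      rw [Finset.mem_Icc] at hj
      have hle : j ≤ a := by omega
      rw [Nat.cast_sub hle, abs_of_nonneg (by
        have : (j:ℝ) ≤ a := by exact_mod_cast hle
        linarith)]
  have hS2 : ∑ j ∈ Finset.Icc (a+1) K, 1/|(a:ℝ)-(j:ℝ)|
      = ∑ d ∈ Finset.Icc 1 (K-a), (1:ℝ)/(d:ℝ) := by
    apply Finset.sum_nbij' (fun j => j - a) (fun d => d + a)
    · intro j hj; rw [Finset.mem_Icc] at *; omega
    · intro d hd; rw [Finset.mem_Icc] at *; omega
    · intro j hj; rw [Finset.mem_Icc] at hj; omega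
    · intro d hd; rw [Finset.mem_Icc] at hd; omega
    · intro j hj
      rw [Finset.mem_Icc] at hj
      have hle : a ≤ j := by omega
      rw [Nat.cast_sub hle, abs_of_nonpos (by
        have : (a:ℝ) ≤ j := by exact_mod_cast hle
        linarith)]
      ring_nf
  have hsub1 : ∑ d ∈ Finset.Icc 1 (a-1), (1:ℝ)/(d:ℝ)
      ≤ ∑ d ∈ Finset.Icc 1 K, (1:ℝ)/(d:ℝ) := by
    apply Finset.sum_le_sum_of_subset_of_nonneg
      (Finset.Icc_subset_Icc_right (by omega))
    intro d _ _; positivity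
  have hsub2 : ∑ d ∈ Finset.Icc 1 (K-a), (1:ℝ)/(d:ℝ)
      ≤ ∑ d ∈ Finset.Icc 1 K, (1:ℝ)/(d:ℝ) := by
    apply Finset.sum_le_sum_of_subset_of_nonneg
      (Finset.Icc_subset_Icc_right (by omega))
    intro d _ _; positivity
  have hh := harm_le K
  rw [hS1, hS2]
  linarith

/-- Weighted double-singularity sum estimate. -/
theorem weighted_double_singularity_sum :
    ∃ C : ℝ, 0 < C ∧
      ∀ K : ℕ, 2 ≤ K → ∀ a : ℕ, 1 ≤ a → a ≤ K →
        (∑ j ∈ (Finset.Icc 1 K).erase a,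
            ((a : ℝ) ^ ((1 : ℝ) / 3) + (j : ℝ) ^ ((1 : ℝ) / 3)) / |(a : ℝ) - (j : ℝ)| *
              ((K : ℝ) ^ ((2 : ℝ) / 3) /
                (((K : ℝ) - (a : ℝ) + 1) * ((K : ℝ) - (j : ℝ) + 1)))) ≤
          C * (K : ℝ) * Real.log K / ((K : ℝ) - (a : ℝ) + 1) ^ 2 := by
  refine ⟨18, by norm_num, ?_⟩
  intro K hK a ha1 haK
  set A : ℝ := (K:ℝ) - a + 1 with hA_def
  have hKR : (2:ℝ) ≤ K := by exact_mod_cast hK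
  have haR : (a:ℝ) ≤ K := by exact_mod_cast haK
  have hA1 : 1 ≤ A := by simp only [hA_def]; linarith
  have hA0 : 0 < A := by linarith
  have hK0 : (0:ℝ) < K := by linarith
  -- termwise bound
  have hterm : ∀ j ∈ (Finset.Icc 1 K).erase a,
      ((a : ℝ) ^ ((1 : ℝ) / 3) + (j : ℝ) ^ ((1 : ℝ) / 3)) / |(a : ℝ) - (j : ℝ)| *
        ((K : ℝ) ^ ((2 : ℝ) / 3) / (A * ((K : ℝ) - (j : ℝ) + 1)))
      ≤ 2*(K:ℝ)/A^2 * (1/|(a:ℝ)-(j:ℝ)| + 1/((K:ℝ)-(j:ℝ)+1)) := by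
    intro j hj
    rw [Finset.mem_erase, Finset.mem_Icc] at hj
    obtain ⟨hja, hj1, hjK⟩ := hj
    have hjR : (j:ℝ) ≤ K := by exact_mod_cast hjK
    set x : ℝ := |(a:ℝ)-(j:ℝ)| with hx_def
    set B : ℝ := (K:ℝ)-(j:ℝ)+1 with hB_def
    have hB1 : 1 ≤ B := by simp only [hB_def]; linarith
    have hB0 : 0 < B := by linarith
    have hx1 : 1 ≤ x := by
      have hne : ((a:ℤ) - (j:ℤ)) ≠ 0 := by omega
      have h1 := Int.one_le_abs hne
      have : ((|(a:ℤ) - (j:ℤ)| : ℤ) : ℝ) = x := by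
        simp only [hx_def]
        push_cast
        rfl
      rw [← this]
      exact_mod_cast h1
    have hx0 : 0 < x := by linarith
    have hN : (a : ℝ) ^ ((1 : ℝ) / 3) + (j : ℝ) ^ ((1 : ℝ) / 3)
        ≤ 2 * (K:ℝ) ^ ((1 : ℝ) / 3) := by
      have h1 : (a : ℝ) ^ ((1 : ℝ) / 3) ≤ (K:ℝ) ^ ((1 : ℝ) / 3) :=
        Real.rpow_le_rpow (by positivity) haR (by norm_num)
      have h2 : (j : ℝ) ^ ((1 : ℝ) / 3) ≤ (K:ℝ) ^ ((1 : ℝ) / 3) :=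
        Real.rpow_le_rpow (by positivity) hjR (by norm_num)
      linarith
    have hKprod : (K:ℝ) ^ ((1:ℝ)/3) * (K:ℝ) ^ ((2:ℝ)/3) = K := by
      rw [← Real.rpow_add hK0]
      norm_num
    have hK23 : (0:ℝ) ≤ (K:ℝ) ^ ((2:ℝ)/3) := by positivity
    have hNum : ((a : ℝ) ^ ((1 : ℝ) / 3) + (j : ℝ) ^ ((1 : ℝ) / 3)) * (K:ℝ) ^ ((2:ℝ)/3)
        ≤ 2 * K := by nlinarith [hN, hK23, hKprod]
    have key : A ≤ x + B := by
      have h1 : (j:ℝ) - a ≤ x := by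
        rw [hx_def, abs_sub_comm]
        exact le_abs_self _
      simp only [hA_def, hB_def] at *
      linarith
    have step1 : ((a : ℝ) ^ ((1 : ℝ) / 3) + (j : ℝ) ^ ((1 : ℝ) / 3)) / x *
        ((K : ℝ) ^ ((2 : ℝ) / 3) / (A * B))
        = ((a : ℝ) ^ ((1 : ℝ) / 3) + (j : ℝ) ^ ((1 : ℝ) / 3)) * (K:ℝ) ^ ((2:ℝ)/3)
          / (x * A * B) := by
      field_simp
    rw [step1]
    have step2 : ((a : ℝ) ^ ((1 : ℝ) / 3) + (j : ℝ) ^ ((1 : ℝ) / 3)) * (K:ℝ) ^ ((2:ℝ)/3)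
          / (x * A * B) ≤ (2*K) / (x * A * B) := by
      gcongr
    refine step2.trans ?_
    rw [one_div_add_one_div (ne_of_gt hx0) (ne_of_gt hB0), div_mul_div_comm,
      div_le_div_iff₀ (by positivity) (by positivity)]
    nlinarith [mul_le_mul_of_nonneg_left key
      (by positivity : (0:ℝ) ≤ 2*(K:ℝ)*x*B), hx0, hB0, hA0, hK0]
  have hsum := Finset.sum_le_sum hterm
  have hsplit : ∑ j ∈ (Finset.Icc 1 K).erase a,
      2*(K:ℝ)/A^2 * (1/|(a:ℝ)-(j:ℝ)| + 1/((K:ℝ)-(j:ℝ)+1))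
      = 2*(K:ℝ)/A^2 * ((∑ j ∈ (Finset.Icc 1 K).erase a, 1/|(a:ℝ)-(j:ℝ)|)
        + ∑ j ∈ (Finset.Icc 1 K).erase a, 1/((K:ℝ)-(j:ℝ)+1)) := by
    rw [← Finset.sum_add_distrib, Finset.mul_sum]
  have habs := sum_abs_le a K ha1 haK
  have hB := sum_B_le a K (by omega)
  have hlogK : (0.69:ℝ) < Real.log K := by
    have h2 : Real.log 2 ≤ Real.log K := Real.log_le_log (by norm_num) hKR
    have := Real.log_two_gt_d9
    linarith
  have hfrac : (0:ℝ) ≤ 2*(K:ℝ)/A^2 := by positivity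
  have hfinal : 2*(K:ℝ)/A^2 * (3*(1 + Real.log K)) ≤ 18 * K * Real.log K / A^2 := by
    have h9 : 3*(1 + Real.log K) ≤ 9 * Real.log K := by linarith
    calc 2*(K:ℝ)/A^2 * (3*(1 + Real.log K)) ≤ 2*(K:ℝ)/A^2 * (9 * Real.log K) := by
          exact mul_le_mul_of_nonneg_left h9 hfrac
      _ = 18 * K * Real.log K / A^2 := by ring
  calc _ ≤ _ := hsum
    _ = 2*(K:ℝ)/A^2 * ((∑ j ∈ (Finset.Icc 1 K).erase a, 1/|(a:ℝ)-(j:ℝ)|)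
        + ∑ j ∈ (Finset.Icc 1 K).erase a, 1/((K:ℝ)-(j:ℝ)+1)) := hsplit
    _ ≤ 2*(K:ℝ)/A^2 * (3*(1 + Real.log K)) := by
        apply mul_le_mul_of_nonneg_left _ hfrac
        linarith
    _ ≤ 18 * K * Real.log K / A^2 := hfinal
end

section
/- (Sum estimate near the upper index.) There exists a constant C > 0 such that for all integers K ≥ 1, one has Σ_{j = ⌈K^{9/10}⌉}^{K} 1/(j^{4/3} (K − j + 1)²) ≤ C K^{−4/3}. -/
open Real

lemma sum_inv_sq_aux : ∀ N : ℕ, ∑ i ∈ Finset.range (N+1), (1:ℝ)/((i:ℝ)+1)^2 ≤ 2 - 1/((N:ℝ)+1) := by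
  intro N
  induction N with
  | zero => norm_num
  | succ n ih =>
    rw [Finset.sum_range_succ]
    have h1 : (1:ℝ)/((n:ℝ)+1+1)^2 ≤ 1/((n:ℝ)+1) - 1/((n:ℝ)+1+1) := by
      have hn : (0:ℝ) < (n:ℝ)+1 := by positivity
      rw [div_sub_div _ _ (ne_of_gt hn) (by positivity)]
      rw [div_le_div_iff₀ (by positivity) (by positivity)]
      ring_nf
      nlinarith [hn]
    push_cast
    push_cast at ih h1
    linarith

lemma sum_inv_sq (N : ℕ) : ∑ i ∈ Finset.range N, (1:ℝ)/((i:ℝ)+1)^2 ≤ 2 := by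
  cases N with
  | zero => simp
  | succ n =>
    have := sum_inv_sq_aux n
    have : (0:ℝ) < (n:ℝ)+1 := by positivity
    have h := sum_inv_sq_aux n
    have : (0:ℝ) ≤ 1/((n:ℝ)+1) := by positivity
    linarith

/-- Sum estimate near the upper index. -/
theorem sum_near_upper_index :
    ∃ C : ℝ, 0 < C ∧
      ∀ K : ℕ, 1 ≤ K →
        (∑ j ∈ Finset.Icc ⌈(K : ℝ) ^ ((9 : ℝ) / 10)⌉₊ K,
            1 / ((j : ℝ) ^ ((4 : ℝ) / 3) * ((K : ℝ) - (j : ℝ) + 1) ^ 2)) ≤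
          C * (K : ℝ) ^ (-(4 : ℝ) / 3) := by
  refine ⟨16, by norm_num, fun K hK => ?_⟩
  have hK0 : (0:ℝ) < K := by exact_mod_cast hK
  have hK1 : (1:ℝ) ≤ K := by exact_mod_cast hK
  set m := ⌈(K : ℝ) ^ ((9 : ℝ) / 10)⌉₊ with hm
  -- per-term bound
  have key : ∀ j ∈ Finset.Icc m K,
      1 / ((j : ℝ) ^ ((4 : ℝ) / 3) * ((K : ℝ) - (j : ℝ) + 1) ^ 2) ≤
      (2:ℝ)^((4:ℝ)/3) * (K:ℝ)^(-(4:ℝ)/3) * (1/(((K:ℝ) - (j:ℝ) + 1)^2)) + 4 * (K:ℝ)^(-(16:ℝ)/5) := by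
    intro j hj
    rw [Finset.mem_Icc] at hj
    obtain ⟨hj1, hj2⟩ := hj
    have hjK : (j:ℝ) ≤ K := by exact_mod_cast hj2
    have hjlow : (K:ℝ)^((9:ℝ)/10) ≤ (j:ℝ) := by
      have := Nat.ceil_le.mp hj1
      exact_mod_cast this
    have hKr1 : (1:ℝ) ≤ (K:ℝ)^((9:ℝ)/10) := Real.one_le_rpow hK1 (by norm_num)
    have hj0 : (0:ℝ) < j := lt_of_lt_of_le one_pos (le_trans hKr1 hjlow)
    have hdenpos : (0:ℝ) < (K:ℝ) - (j:ℝ) + 1 := by linarith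
    rcases le_or_gt (K:ℝ) (2 * j) with hcase | hcase
    · -- j ≥ K/2
      have h1 : (K:ℝ)^((4:ℝ)/3) / (2:ℝ)^((4:ℝ)/3) ≤ (j:ℝ)^((4:ℝ)/3) := by
        rw [← Real.div_rpow (le_of_lt hK0) (by norm_num)]
        exact Real.rpow_le_rpow (by positivity) (by linarith) (by norm_num)
      have hKp : (0:ℝ) < (K:ℝ)^((4:ℝ)/3) / (2:ℝ)^((4:ℝ)/3) := by positivity
      have hb : 1 / ((j : ℝ) ^ ((4 : ℝ) / 3) * ((K : ℝ) - (j : ℝ) + 1) ^ 2) ≤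
          (2:ℝ)^((4:ℝ)/3) * (K:ℝ)^(-(4:ℝ)/3) * (1/(((K:ℝ) - (j:ℝ) + 1)^2)) := by
        rw [neg_div, Real.rpow_neg (le_of_lt hK0)]
        rw [div_le_iff₀ (by positivity)]
        have : (2:ℝ)^((4:ℝ)/3) * ((K:ℝ)^((4:ℝ)/3))⁻¹ * (1/(((K:ℝ) - (j:ℝ) + 1)^2)) *
            ((j : ℝ) ^ ((4 : ℝ) / 3) * ((K : ℝ) - (j : ℝ) + 1) ^ 2)
            = (j:ℝ)^((4:ℝ)/3) / ((K:ℝ)^((4:ℝ)/3) / (2:ℝ)^((4:ℝ)/3)) := by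
          field_simp
        rw [this]
        rw [le_div_iff₀ hKp]
        linarith
      have : (0:ℝ) ≤ 4 * (K:ℝ)^(-(16:ℝ)/5) := by positivity
      linarith
    · -- K - j + 1 > K/2
      have hden : (K:ℝ)/2 ≤ (K:ℝ) - (j:ℝ) + 1 := by linarith
      have hj43 : (K:ℝ)^((6:ℝ)/5) ≤ (j:ℝ)^((4:ℝ)/3) := by
        have h1 : ((K:ℝ)^((9:ℝ)/10))^((4:ℝ)/3) ≤ (j:ℝ)^((4:ℝ)/3) :=
          Real.rpow_le_rpow (by positivity) hjlow (by norm_num)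
        rw [← Real.rpow_mul (le_of_lt hK0)] at h1
        norm_num at h1
        exact h1
      have hKK : (K:ℝ)^((6:ℝ)/5) * ((K:ℝ)/2)^2 = (K:ℝ)^((16:ℝ)/5) / 4 := by
        have h2 : ((K:ℝ))^(2:ℕ) = (K:ℝ)^((2:ℝ)) := by
          rw [← Real.rpow_natCast]; norm_num
        rw [div_pow, h2, ← mul_div_assoc, ← Real.rpow_add hK0]
        norm_num
      have hb : 1 / ((j : ℝ) ^ ((4 : ℝ) / 3) * ((K : ℝ) - (j : ℝ) + 1) ^ 2) ≤
          4 * (K:ℝ)^(-(16:ℝ)/5) := by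
        have hlhs : 1 / ((j : ℝ) ^ ((4 : ℝ) / 3) * ((K : ℝ) - (j : ℝ) + 1) ^ 2) ≤
            1 / ((K:ℝ)^((6:ℝ)/5) * ((K:ℝ)/2)^2) := by
          apply one_div_le_one_div_of_le (by positivity)
          apply mul_le_mul hj43 (by nlinarith) (by positivity) (by positivity)
        rw [hKK] at hlhs
        rw [neg_div, Real.rpow_neg (le_of_lt hK0)]
        calc 1 / ((j : ℝ) ^ ((4 : ℝ) / 3) * ((K : ℝ) - (j : ℝ) + 1) ^ 2)
            ≤ 1 / ((K:ℝ)^((16:ℝ)/5) / 4) := hlhs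
          _ = 4 * ((K:ℝ)^((16:ℝ)/5))⁻¹ := by
              rw [one_div_div, div_eq_mul_inv]

      have hpos : (0:ℝ) ≤ (2:ℝ)^((4:ℝ)/3) * (K:ℝ)^(-(4:ℝ)/3) * (1/(((K:ℝ) - (j:ℝ) + 1)^2)) := by
        positivity
      linarith
  have hsum := Finset.sum_le_sum key
  rw [Finset.sum_add_distrib, Finset.sum_const, ← Finset.mul_sum] at hsum
  -- bound the reflected sum
  have hrefl : ∑ j ∈ Finset.Icc m K, (1:ℝ)/(((K:ℝ) - (j:ℝ) + 1)^2) ≤ 2 := by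
    have hsub : Finset.Icc m K ⊆ Finset.range (K+1) := by
      intro x hx
      rw [Finset.mem_Icc] at hx
      rw [Finset.mem_range]
      omega
    have h1 : ∑ j ∈ Finset.Icc m K, (1:ℝ)/(((K:ℝ) - (j:ℝ) + 1)^2) ≤
        ∑ j ∈ Finset.range (K+1), (1:ℝ)/(((K:ℝ) - (j:ℝ) + 1)^2) := by
      apply Finset.sum_le_sum_of_subset_of_nonneg hsub
      intro i hi _
      rw [Finset.mem_range] at hi
      have : (i:ℝ) ≤ K := by exact_mod_cast Nat.lt_succ_iff.mp hi
      positivity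
    have h2 : ∑ j ∈ Finset.range (K+1), (1:ℝ)/(((K:ℝ) - (j:ℝ) + 1)^2) =
        ∑ j ∈ Finset.range (K+1), (1:ℝ)/(((j:ℝ)+1)^2) := by
      rw [← Finset.sum_range_reflect (fun i => (1:ℝ)/(((i:ℝ)+1)^2)) (K+1)]
      apply Finset.sum_congr rfl
      intro i hi
      rw [Finset.mem_range] at hi
      have hiK : i ≤ K := Nat.lt_succ_iff.mp hi
      have : ((K + 1 - 1 - i : ℕ) : ℝ) = (K:ℝ) - i := by
        push_cast [Nat.cast_sub hiK]
        ring
      rw [this]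
    calc _ ≤ _ := h1
      _ = _ := h2
      _ ≤ 2 := sum_inv_sq (K+1)
  have hcard : (Finset.Icc m K).card ≤ K + 1 := by
    rw [Nat.card_Icc]; omega
  have hcardR : ((Finset.Icc m K).card : ℝ) ≤ 2 * K := by
    have : ((Finset.Icc m K).card : ℝ) ≤ (K:ℝ) + 1 := by exact_mod_cast hcard
    linarith
  have h234 : (2:ℝ)^((4:ℝ)/3) ≤ 4 := by
    have : (2:ℝ)^((4:ℝ)/3) ≤ (2:ℝ)^(2:ℝ) :=
      Real.rpow_le_rpow_of_exponent_le (by norm_num) (by norm_num)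
    have h4 : (2:ℝ)^(2:ℝ) = 4 := by
      rw [show ((2:ℝ):ℝ) = ((2:ℕ):ℝ) by norm_num, Real.rpow_natCast]; norm_num
    linarith
  have hKneg : (0:ℝ) < (K:ℝ)^(-(4:ℝ)/3) := Real.rpow_pos_of_pos hK0 _
  have hterm1 : (2:ℝ)^((4:ℝ)/3) * (K:ℝ)^(-(4:ℝ)/3) *
      (∑ j ∈ Finset.Icc m K, 1/(((K:ℝ) - (j:ℝ) + 1)^2)) ≤ 8 * (K:ℝ)^(-(4:ℝ)/3) := by
    have h1 : (2:ℝ)^((4:ℝ)/3) * (K:ℝ)^(-(4:ℝ)/3) *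
        (∑ j ∈ Finset.Icc m K, 1/(((K:ℝ) - (j:ℝ) + 1)^2)) ≤
        (2:ℝ)^((4:ℝ)/3) * (K:ℝ)^(-(4:ℝ)/3) * 2 := by
      apply mul_le_mul_of_nonneg_left hrefl (by positivity)
    calc _ ≤ (2:ℝ)^((4:ℝ)/3) * (K:ℝ)^(-(4:ℝ)/3) * 2 := h1
      _ ≤ 4 * (K:ℝ)^(-(4:ℝ)/3) * 2 := by nlinarith
      _ = 8 * (K:ℝ)^(-(4:ℝ)/3) := by ring
  have hterm2 : ((Finset.Icc m K).card : ℝ) * (4 * (K:ℝ)^(-(16:ℝ)/5)) ≤ 8 * (K:ℝ)^(-(4:ℝ)/3) := by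
    have hKK : (K:ℝ) * (K:ℝ)^(-(16:ℝ)/5) = (K:ℝ)^(-(11:ℝ)/5) := by
      nth_rewrite 1 [← Real.rpow_one (K:ℝ)]
      rw [← Real.rpow_add hK0]
      norm_num
    have hmono : (K:ℝ)^(-(11:ℝ)/5) ≤ (K:ℝ)^(-(4:ℝ)/3) :=
      Real.rpow_le_rpow_of_exponent_le hK1 (by norm_num)
    have hpos : (0:ℝ) < (K:ℝ)^(-(16:ℝ)/5) := Real.rpow_pos_of_pos hK0 _
    calc ((Finset.Icc m K).card : ℝ) * (4 * (K:ℝ)^(-(16:ℝ)/5))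
        ≤ (2 * K) * (4 * (K:ℝ)^(-(16:ℝ)/5)) := by
          apply mul_le_mul_of_nonneg_right hcardR (by positivity)
      _ = 8 * ((K:ℝ) * (K:ℝ)^(-(16:ℝ)/5)) := by ring
      _ = 8 * (K:ℝ)^(-(11:ℝ)/5) := by rw [hKK]
      _ ≤ 8 * (K:ℝ)^(-(4:ℝ)/3) := by linarith
  have : (16:ℝ) * (K:ℝ)^(-(4:ℝ)/3) = 8 * (K:ℝ)^(-(4:ℝ)/3) + 8 * (K:ℝ)^(-(4:ℝ)/3) := by ring
  rw [this]
  calc _ ≤ _ := hsum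
    _ ≤ _ := by
      rw [nsmul_eq_mul] at *
      linarith
end

section
/- (Tail sum estimate for the long-range forcing term.) There exists a constant C > 0 such that for all integers K ≥ 1 and all integers i with 1 ≤ i ≤ K, one has Σ_{j = K+1}^{∞} j^{2/3}/(j − i)² ≤ C K^{2/3}/(K − i + 1). -/
/-!
Write `j = x + i`, so that `x` runs over the reals `m, m + 1, …` with `m = K - i + 1`. The ratio
`j / x` is largest at `x = m`, so each term is at most `((K + 1) / m) ^ (2/3) * x ^ (-4/3)`, and
`x ^ (-4/3) ≤ 6 (x ^ (-1/3) - (x + 1) ^ (-1/3))` telescopes. Hence the tail is at most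
`6 (K + 1) ^ (2/3) / m ≤ 12 K ^ (2/3) / m`.
-/

open Real

lemma pow_four_le_six_mul_sub {a b : ℝ} (hb : 0 < b) (hba : b ≤ a)
    (hcube : a ^ 3 - b ^ 3 = a ^ 3 * b ^ 3) (hab : a ^ 3 ≤ 2 * b ^ 3) :
    a ^ 4 ≤ 6 * (a - b) := by
  have ha : 0 < a := hb.trans_le hba
  -- `a - b = a³b³ / (a² + ab + b²) ≥ a³b³ / (3a²)`, and `b³ ≥ a³ / 2`
  have hsub : a * b ^ 3 ≤ 3 * (a - b) := by
    have h : a ^ 3 * b ^ 3 ≤ (a - b) * (3 * a ^ 2) := by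
      rw [← hcube]
      nlinarith [mul_nonneg (mul_nonneg (sub_nonneg.2 hba) (sub_nonneg.2 hba))
        (by positivity : (0 : ℝ) ≤ 2 * a + b)]
    nlinarith [pow_pos ha 2]
  nlinarith [mul_le_mul_of_nonneg_left hab ha.le, pow_pos ha 2]

lemma rpow_neg_four_thirds_le {x : ℝ} (hx : 1 ≤ x) :
    x ^ (-(4 / 3) : ℝ) ≤ 6 * (x ^ (-(1 / 3) : ℝ) - (x + 1) ^ (-(1 / 3) : ℝ)) := by
  have hx0 : 0 < x := by linarith
  have hx1 : 0 < x + 1 := by linarith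
  have cube : ∀ y : ℝ, 0 < y → (y ^ (-(1 / 3) : ℝ)) ^ 3 = y⁻¹ := fun y hy => by
    rw [← rpow_natCast, ← rpow_mul hy.le]; norm_num [rpow_neg_one]
  have hfour : x ^ (-(4 / 3) : ℝ) = (x ^ (-(1 / 3) : ℝ)) ^ 4 := by
    rw [← rpow_natCast, ← rpow_mul hx0.le]; norm_num
  rw [hfour]
  apply pow_four_le_six_mul_sub (rpow_pos_of_pos hx1 _)
  · exact rpow_le_rpow_of_nonpos hx0 (by linarith) (by norm_num)
  · rw [cube x hx0, cube _ hx1]; field_simp; ring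
  · rw [cube x hx0, cube _ hx1]
    rw [inv_le_iff_one_le_mul₀ hx0]
    field_simp
    linarith

lemma tsum_le_of_le_sub_succ {f g : ℕ → ℝ} (hf : ∀ n, 0 ≤ f n) (hg : ∀ n, 0 ≤ g n)
    (h : ∀ n, f n ≤ g n - g (n + 1)) : ∑' n, f n ≤ g 0 :=
  Real.tsum_le_of_sum_range_le hf fun n => calc
    ∑ k ∈ Finset.range n, f k ≤ ∑ k ∈ Finset.range n, (g k - g (k + 1)) :=
      Finset.sum_le_sum fun k _ => h k
    _ = g 0 - g n := Finset.sum_range_sub' g n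
    _ ≤ g 0 := sub_le_self _ (hg n)

lemma tsum_eq_tsum_nat_add_of_eq_zero {α : Type*} [AddCommMonoid α] [TopologicalSpace α]
    {f : ℕ → α} {k : ℕ} (hf : ∀ j < k, f j = 0) :
    ∑' j, f j = ∑' n, f (n + k) :=
  ((add_left_injective k).tsum_eq fun j hj =>
    ⟨j - k, Nat.sub_add_cancel (not_lt.1 fun hjk => hj (hf j hjk))⟩).symm

lemma add_rpow_div_sq_le {x m i : ℝ} (hi : 0 ≤ i) (hm : 0 < m) (hmx : m ≤ x) :
    (x + i) ^ ((2 : ℝ) / 3) / x ^ 2 ≤ ((m + i) / m) ^ ((2 : ℝ) / 3) * x ^ (-(4 / 3) : ℝ) := by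
  have hx : 0 < x := hm.trans_le hmx
  have hratio : (x + i) / x ≤ (m + i) / m := by
    rw [div_le_div_iff₀ hx hm]; nlinarith
  calc (x + i) ^ ((2 : ℝ) / 3) / x ^ 2
      = ((x + i) / x) ^ ((2 : ℝ) / 3) * x ^ (-(4 / 3) : ℝ) := by
        rw [div_rpow (by linarith) hx.le, show (-(4 / 3) : ℝ) = 2 / 3 - (2 : ℕ) by norm_num,
          rpow_sub_natCast hx.ne']
        field_simp
    _ ≤ ((m + i) / m) ^ ((2 : ℝ) / 3) * x ^ (-(4 / 3) : ℝ) := by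
        gcongr

lemma tsum_add_rpow_div_sq_le {m i : ℝ} (hi : 0 ≤ i) (hm : 1 ≤ m) :
    ∑' n : ℕ, (m + n + i) ^ ((2 : ℝ) / 3) / (m + n) ^ 2 ≤ 6 * (m + i) ^ ((2 : ℝ) / 3) / m := by
  have hm0 : 0 < m := by linarith
  calc ∑' n : ℕ, (m + n + i) ^ ((2 : ℝ) / 3) / (m + n) ^ 2
      ≤ 6 * ((m + i) / m) ^ ((2 : ℝ) / 3) * (m + ((0 : ℕ) : ℝ)) ^ (-(1 / 3) : ℝ) := by
        refine tsum_le_of_le_sub_succ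
          (g := fun n : ℕ => 6 * ((m + i) / m) ^ ((2 : ℝ) / 3) * (m + n) ^ (-(1 / 3) : ℝ))
          (fun n => by positivity) (fun n => by positivity) fun n => ?_
        have hmn : m ≤ m + n := le_add_of_nonneg_right n.cast_nonneg
        calc (m + n + i) ^ ((2 : ℝ) / 3) / (m + n) ^ 2
            ≤ ((m + i) / m) ^ ((2 : ℝ) / 3) * (m + n) ^ (-(4 / 3) : ℝ) :=
              add_rpow_div_sq_le hi hm0 hmn
          _ ≤ ((m + i) / m) ^ ((2 : ℝ) / 3) *
                (6 * ((m + n) ^ (-(1 / 3) : ℝ) - (m + n + 1) ^ (-(1 / 3) : ℝ))) := by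
              gcongr; exact rpow_neg_four_thirds_le (hm.trans hmn)
          _ = _ := by push_cast; ring_nf
    _ = 6 * (m + i) ^ ((2 : ℝ) / 3) / m := by
        rw [Nat.cast_zero, add_zero, div_rpow (by linarith) hm0.le,
          show (-(1 / 3) : ℝ) = 2 / 3 - 1 by norm_num, rpow_sub_one hm0.ne']
        field_simp

lemma add_one_rpow_le_two_mul_rpow {x p : ℝ} (hx : 1 ≤ x) (hp0 : 0 ≤ p) (hp1 : p ≤ 1) :
    (x + 1) ^ p ≤ 2 * x ^ p := calc
  (x + 1) ^ p ≤ (2 * x) ^ p := by gcongr; linarith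
  _ = 2 ^ p * x ^ p := mul_rpow (by norm_num) (by linarith)
  _ ≤ 2 * x ^ p := by
      gcongr
      simpa using rpow_le_rpow_of_exponent_le (by norm_num : (1 : ℝ) ≤ 2) hp1

/-- Tail sum estimate for the long-range forcing term. -/
theorem tail_sum_forcing :
    ∃ C : ℝ, 0 < C ∧
      ∀ K : ℕ, 1 ≤ K → ∀ i : ℕ, 1 ≤ i → i ≤ K →
        (∑' j : ℕ, if K + 1 ≤ j then (j : ℝ) ^ ((2 : ℝ) / 3) / ((j : ℝ) - (i : ℝ)) ^ 2 else 0) ≤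
          C * (K : ℝ) ^ ((2 : ℝ) / 3) / ((K : ℝ) - (i : ℝ) + 1) := by
  refine ⟨12, by norm_num, fun K hK i hi hiK => ?_⟩
  have hK' : (1 : ℝ) ≤ K := by exact_mod_cast hK
  have hiK' : (i : ℝ) ≤ K := by exact_mod_cast hiK
  set m : ℝ := K - i + 1
  rw [tsum_eq_tsum_nat_add_of_eq_zero (k := K + 1) fun j hj => if_neg (by omega)]
  calc ∑' n : ℕ, (if K + 1 ≤ n + (K + 1) then
          ((n + (K + 1) : ℕ) : ℝ) ^ ((2 : ℝ) / 3) / (((n + (K + 1) : ℕ) : ℝ) - i) ^ 2 else 0)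
      = ∑' n : ℕ, (m + n + i) ^ ((2 : ℝ) / 3) / (m + n) ^ 2 := by
        refine tsum_congr fun n => ?_
        have hj : ((n + (K + 1) : ℕ) : ℝ) = m + n + i := by simp only [m]; push_cast; ring
        rw [if_pos (by omega), hj, add_sub_cancel_right]
    _ ≤ 6 * (m + i) ^ ((2 : ℝ) / 3) / m := tsum_add_rpow_div_sq_le (by positivity) (by linarith)
    _ ≤ 12 * (K : ℝ) ^ ((2 : ℝ) / 3) / m := by
        have hm : 0 < m := by linarith
        have hK1 : m + i = K + 1 := by ring
        rw [hK1]
        refine div_le_div_of_nonneg_right ?_ hm.le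
        linarith [add_one_rpow_le_two_mul_rpow hK' (by norm_num : (0 : ℝ) ≤ 2 / 3) (by norm_num)]
end
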